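/- With the data E₀, E₁, π₀, π₁, U, T₀, T₁, N₀, N₁ as in the context, assume π₀(N₀) ⊆ T₀ and π₁(N₁) ⊆ T₁. Define K₀ = { (λ,φ) ∈ W(E₀) : λ(u) = λ(0) − π₀(∫₀ᵘ φ(s) ds) for all u, λ(0) ∈ π₀(N₀), U⁻¹(λ(1)) ∈ T₁ } and K₁ = { (λ,φ) ∈ W(E₀) : λ(u) = λ(0) − π₀(∫₀ᵘ φ(s) ds) for all u, λ(0) ∈ T₀, U⁻¹(λ(1)) ∈ π₁(N₁) }. Then K₀^⊥ = K₁ (Ω-orthogonal taken in W(E₀)). -/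

import Mathlib

open MeasureTheory Set

/-- An element of `W(E)`: a pair `(λ, φ)` of continuous maps on `[0,1]` with values in `E`
and in the dual `E* = E →L[ℝ] ℝ` respectively. -/
structure WPair (E : Type*) [NormedAddCommGroup E] [NormedSpace ℝ E] where
  lam : ℝ → E
  phi : ℝ → E →L[ℝ] ℝ
  lam_cont : ContinuousOn lam (Icc 0 1)
  phi_cont : ContinuousOn phi (Icc 0 1)

/-- The alternating bilinear form `Ω((λ,φ),(λ',φ')) = ∫₀¹ (φ(u)(λ'(u)) − φ'(u)(λ(u))) du`. -/
noncomputable def Omega {E : Type*} [NormedAddCommGroup E] [NormedSpace ℝ E]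
    (w w' : WPair E) : ℝ :=
  ∫ u in (0:ℝ)..(1:ℝ), (w.phi u (w'.lam u) - w'.phi u (w.lam u))

/-- The `Ω`-orthogonal of a subset of `W(E)`. -/
def orth {E : Type*} [NormedAddCommGroup E] [NormedSpace ℝ E] (A : Set (WPair E)) :
    Set (WPair E) :=
  {w | ∀ a ∈ A, Omega a w = 0}

/-- The annihilator `N = { α ∈ E* : α vanishes on T }` of a subspace `T ⊆ E`. -/
def Ann {E : Type*} [NormedAddCommGroup E] [NormedSpace ℝ E] (T : Submodule ℝ E) :
    Set (E →L[ℝ] ℝ) :=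
  {α | ∀ v ∈ T, α v = 0}

/-- The space `V(T₀,T₁)` of solutions `(λ,φ)` of `λ(u) = λ(0) − π₀ ∫₀ᵘ φ` with boundary
conditions `λ(0) ∈ T₀` and `U⁻¹(λ(1)) ∈ T₁`. -/
noncomputable def VSet {E₀ E₁ : Type*}
    [NormedAddCommGroup E₀] [NormedSpace ℝ E₀]
    [NormedAddCommGroup E₁] [NormedSpace ℝ E₁]
    (π₀ : (E₀ →L[ℝ] ℝ) →ₗ[ℝ] E₀) (U : E₁ ≃L[ℝ] E₀)
    (T₀ : Submodule ℝ E₀) (T₁ : Submodule ℝ E₁) : Set (WPair E₀) :=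
  {w | (∀ u ∈ Icc (0:ℝ) 1, w.lam u = w.lam 0 - π₀ (∫ s in (0:ℝ)..u, w.phi s)) ∧
       w.lam 0 ∈ T₀ ∧ U.symm (w.lam 1) ∈ T₁}

/-!
Along solutions of `λ' = -π₀ φ`, an integration by parts and the skew-symmetry of `π₀` reduce
`Ω(a, w)` to the boundary terms `(∫ φ_a)(λ_w 1) - (∫ φ_w)(λ_a 0)`, and the compatibility
`U π₁ Uᵀ = π₀` makes them cancel for `a ∈ K₀`, `w ∈ K₁`. Conversely, pairing `w ∈ K₀^⊥` with the
solutions `φ = g α`, `λ = -(∫ g) π₀ α`, `∫₀¹ g = 0`, shows by du Bois-Reymond's lemma that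
`λ_w + π₀ ∫ φ_w` is constant, i.e. `w` is a solution; the solutions with `g = 1` then test the
two boundary conditions of `w` against annihilators, which detect membership in finite dimension.
-/

section Primitive

variable {F : Type*} [NormedAddCommGroup F] [NormedSpace ℝ F] {f : ℝ → F} {a b : ℝ}

theorem ContinuousOn.continuousOn_primitive (hf : ContinuousOn f (Icc a b)) (hab : a ≤ b) :
    ContinuousOn (fun t => ∫ s in a..t, f s) (Icc a b) := by
  rw [← uIcc_of_le hab] at hf ⊢
  exact intervalIntegral.continuousOn_primitive_interval hf.integrableOn_uIcc

theorem ContinuousOn.hasDerivAt_primitive [CompleteSpace F] (hf : ContinuousOn f (Icc a b)) {u : ℝ}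
    (hu : u ∈ Ioo a b) : HasDerivAt (fun t => ∫ s in a..t, f s) (f u) u :=
  intervalIntegral.integral_hasDerivAt_right
    ((hf.mono (Icc_subset_Icc_right hu.2.le)).intervalIntegrable_of_Icc hu.1.le)
    ((hf.mono Ioo_subset_Icc_self).stronglyMeasurableAtFilter isOpen_Ioo u hu)
    (hf.continuousAt (Icc_mem_nhds hu.1 hu.2))

end Primitive

/-- The fundamental lemma of the calculus of variations in du Bois-Reymond's form. -/
theorem eqOn_Icc_of_forall_integral_mul_eq_zero {h : ℝ → ℝ} {a b : ℝ} (hab : a < b)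
    (hh : ContinuousOn h (Icc a b))
    (H : ∀ g : ℝ → ℝ, ContinuousOn g (Icc a b) → ∫ u in a..b, g u = 0 →
      ∫ u in a..b, g u * h u = 0) :
    ∀ u ∈ Icc a b, h u = h a := by
  set c := (∫ u in a..b, h u) / (b - a)
  have hg : ContinuousOn (fun u => h u - c) (Icc a b) := hh.sub continuousOn_const
  have hint : IntervalIntegrable h volume a b := hh.intervalIntegrable_of_Icc hab.le
  have hmean : ∫ u in a..b, (h u - c) = 0 := by
    rw [intervalIntegral.integral_sub hint intervalIntegrable_const,
      intervalIntegral.integral_const, smul_eq_mul, mul_div_cancel₀ _ (sub_ne_zero.2 hab.ne'),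
      sub_self]
  have hsq : ∫ u in a..b, (h u - c) ^ 2 = 0 := by
    have hcross := H _ hg hmean
    calc ∫ u in a..b, (h u - c) ^ 2
        = ∫ u in a..b, ((h u - c) * h u - c * (h u - c)) := by congr 1; ext u; ring
      _ = (∫ u in a..b, (h u - c) * h u) - c * ∫ u in a..b, (h u - c) := by
          rw [intervalIntegral.integral_sub (f := fun u => (h u - c) * h u)
            (g := fun u => c * (h u - c)) ((hg.mul hh).intervalIntegrable_of_Icc hab.le)
            ((continuousOn_const.mul hg).intervalIntegrable_of_Icc hab.le),
            intervalIntegral.integral_const_mul]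
      _ = 0 := by rw [hcross, hmean]; ring
  have hc : ∀ u ∈ Icc a b, h u = c := by
    by_contra! hne
    obtain ⟨u, hu, hneu⟩ := hne
    have hpos := intervalIntegral.integral_pos hab (hg.pow 2) (fun _ _ => sq_nonneg _)
      ⟨u, hu, sq_pos_of_ne_zero (sub_ne_zero.2 hneu)⟩
    exact hpos.ne' hsq
  intro u hu
  rw [hc u hu, hc a (left_mem_Icc.2 hab.le)]

section Solutions

variable {E : Type*} [NormedAddCommGroup E] [NormedSpace ℝ E]

theorem Omega_comm (a w : WPair E) : Omega w a = -Omega a w := by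
  rw [Omega, Omega, ← intervalIntegral.integral_neg]
  congr 1
  ext u
  ring

def IsSolution (π : (E →L[ℝ] ℝ) →ₗ[ℝ] E) (w : WPair E) : Prop :=
  ∀ u ∈ Icc (0:ℝ) 1, w.lam u = w.lam 0 - π (∫ s in (0:ℝ)..u, w.phi s)

variable {π : (E →L[ℝ] ℝ) →ₗ[ℝ] E} {w : WPair E}

theorem IsSolution.lam_add_eq (hw : IsSolution π w) {u : ℝ} (hu : u ∈ Icc (0:ℝ) 1) :
    w.lam u + π (∫ s in (0:ℝ)..u, w.phi s) = w.lam 0 := by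
  rw [hw u hu, sub_add_cancel]

theorem IsSolution.map_integral_phi (hw : IsSolution π w) :
    π (∫ s in (0:ℝ)..1, w.phi s) = w.lam 0 - w.lam 1 := by
  rw [hw 1 (right_mem_Icc.2 zero_le_one), sub_sub_cancel]

noncomputable def testPair (π : (E →L[ℝ] ℝ) →ₗ[ℝ] E) (α : E →L[ℝ] ℝ) (v₀ : E) (g : ℝ → ℝ)
    (hg : ContinuousOn g (Icc 0 1)) : WPair E where
  lam u := v₀ - (∫ s in (0:ℝ)..u, g s) • π α
  phi u := g u • α
  lam_cont :=
    continuousOn_const.sub ((hg.continuousOn_primitive zero_le_one).smul continuousOn_const)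
  phi_cont := hg.smul continuousOn_const

theorem testPair_isSolution (α : E →L[ℝ] ℝ) (v₀ : E) {g : ℝ → ℝ}
    (hg : ContinuousOn g (Icc 0 1)) : IsSolution π (testPair π α v₀ g hg) := by
  intro u _
  simp [testPair, intervalIntegral.integral_smul_const]

variable [FiniteDimensional ℝ E]

/-- For a solution `a`, `Ω(a, w)` only sees `w` through `λ_w + π ∫ φ_w`, which is constant
exactly when `w` is itself a solution. -/
theorem Omega_eq_of_isSolution_left (hπ : ∀ α β : E →L[ℝ] ℝ, α (π β) = -β (π α))
    {a : WPair E} (ha : IsSolution π a) (w : WPair E) :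
    Omega a w = (∫ u in (0:ℝ)..1, a.phi u (w.lam u + π (∫ s in (0:ℝ)..u, w.phi s)))
      - (∫ s in (0:ℝ)..1, w.phi s) (a.lam 1) := by
  set πL := LinearMap.toContinuousLinearMap π
  set F := fun t => ∫ s in (0:ℝ)..t, a.phi s
  set G := fun t => ∫ s in (0:ℝ)..t, w.phi s
  have hF : ContinuousOn F (Icc 0 1) := a.phi_cont.continuousOn_primitive zero_le_one
  have hG : ContinuousOn G (Icc 0 1) := w.phi_cont.continuousOn_primitive zero_le_one
  -- `P u = G u (λ_a u)`, written through the equation so that it is differentiable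
  set P := fun t => G t (a.lam 0 - πL (F t))
  set P' := fun t => w.phi t (a.lam 0 - πL (F t)) + a.phi t (πL (G t))
  have hP : ∀ u ∈ Ioo (0:ℝ) 1, HasDerivAt P (P' u) u := by
    intro u hu
    refine ((w.phi_cont.hasDerivAt_primitive hu).clm_apply
      ((πL.hasFDerivAt.comp_hasDerivAt u (a.phi_cont.hasDerivAt_primitive hu)).const_sub
        (a.lam 0))).congr_deriv ?_
    simp only [P', πL, Function.comp_apply, map_neg, LinearMap.coe_toContinuousLinearMap']
    rw [hπ _ (a.phi u), neg_neg]
  have hD : ContinuousOn (fun u => w.lam u + π (G u)) (Icc 0 1) :=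
    w.lam_cont.add (πL.continuous.comp_continuousOn hG)
  have hPc : ContinuousOn P (Icc 0 1) :=
    hG.clm_apply (continuousOn_const.sub (πL.continuous.comp_continuousOn hF))
  have hP'c : ContinuousOn P' (Icc 0 1) :=
    (w.phi_cont.clm_apply (continuousOn_const.sub (πL.continuous.comp_continuousOn hF))).add
      (a.phi_cont.clm_apply (πL.continuous.comp_continuousOn hG))
  have hint := (a.phi_cont.clm_apply hD).intervalIntegrable_of_Icc (μ := volume) zero_le_one
  have hint' := hP'c.intervalIntegrable_of_Icc (μ := volume) zero_le_one
  calc Omega a w = ∫ u in (0:ℝ)..1, (a.phi u (w.lam u + π (G u)) - P' u) := by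
        refine intervalIntegral.integral_congr fun u hu => ?_
        rw [uIcc_of_le zero_le_one] at hu
        simp only [P', πL, LinearMap.coe_toContinuousLinearMap', map_add]
        rw [← ha u hu]
        ring
    _ = (∫ u in (0:ℝ)..1, a.phi u (w.lam u + π (G u))) - (P 1 - P 0) := by
        rw [intervalIntegral.integral_sub hint hint',
          intervalIntegral.integral_eq_sub_of_hasDerivAt_of_le zero_le_one hPc hP hint']
    _ = _ := by
        simp only [P, G, F, πL, LinearMap.coe_toContinuousLinearMap',
          intervalIntegral.integral_same, ← ha 1 (right_mem_Icc.2 zero_le_one), zero_apply, sub_zero]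

theorem Omega_eq_of_isSolution (hπ : ∀ α β : E →L[ℝ] ℝ, α (π β) = -β (π α))
    {a : WPair E} (ha : IsSolution π a) (hw : IsSolution π w) :
    Omega a w = (∫ s in (0:ℝ)..1, a.phi s) (w.lam 0) - (∫ s in (0:ℝ)..1, w.phi s) (a.lam 1) := by
  rw [Omega_eq_of_isSolution_left hπ ha, ContinuousLinearMap.intervalIntegral_apply
    (a.phi_cont.intervalIntegrable_of_Icc zero_le_one)]
  congr 1
  refine intervalIntegral.integral_congr fun u hu => ?_
  rw [uIcc_of_le zero_le_one] at hu
  rw [hw.lam_add_eq hu]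

theorem Omega_testPair_one (hπ : ∀ α β : E →L[ℝ] ℝ, α (π β) = -β (π α))
    (hw : IsSolution π w) (α : E →L[ℝ] ℝ) (v₀ : E) :
    Omega (testPair π α v₀ (fun _ => 1) continuousOn_const) w =
      α (w.lam 0) - (∫ s in (0:ℝ)..1, w.phi s) (v₀ - π α) := by
  rw [Omega_eq_of_isSolution hπ (testPair_isSolution α v₀ _) hw]
  simp [testPair]

theorem isSolution_of_forall_Omega_testPair_eq_zero
    (hπ : ∀ α β : E →L[ℝ] ℝ, α (π β) = -β (π α))
    (hw : ∀ α g (hg : ContinuousOn g (Icc 0 1)), ∫ u in (0:ℝ)..1, g u = 0 →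
      Omega (testPair π α 0 g hg) w = 0) :
    IsSolution π w := by
  have hD : ContinuousOn (fun u => w.lam u + π (∫ s in (0:ℝ)..u, w.phi s)) (Icc 0 1) :=
    w.lam_cont.add (π.continuous_of_finiteDimensional.comp_continuousOn
      (w.phi_cont.continuousOn_primitive zero_le_one))
  have hconst : ∀ α : E →L[ℝ] ℝ, ∀ u ∈ Icc (0:ℝ) 1,
      α (w.lam u + π (∫ s in (0:ℝ)..u, w.phi s)) = α (w.lam 0) := by
    intro α
    have := eqOn_Icc_of_forall_integral_mul_eq_zero zero_lt_one
      (α.continuous.comp_continuousOn hD) fun g hg hg0 => ?_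
    · simpa using this
    have h := hw α g hg hg0
    rw [Omega_eq_of_isSolution_left hπ (testPair_isSolution α 0 hg)] at h
    simpa [testPair, hg0] using h
  intro u hu
  rw [eq_sub_iff_add_eq, SeparatingDual.eq_iff_forall_dual_eq (R := ℝ)]
  exact fun α => hconst α u hu

end Solutions

section Annihilator

variable {E : Type*} [NormedAddCommGroup E] [NormedSpace ℝ E]

def annSubmodule (T : Submodule ℝ E) : Submodule ℝ (E →L[ℝ] ℝ) where
  carrier := Ann T
  zero_mem' _ _ := rfl
  add_mem' ha hb v hv := by simp [ha v hv, hb v hv]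
  smul_mem' _ _ ha v hv := by simp [ha v hv]

theorem mem_of_forall_ann [FiniteDimensional ℝ E] {T : Submodule ℝ E} {x : E}
    (h : ∀ α ∈ Ann T, α x = 0) : x ∈ T := by
  rw [← Subspace.dualAnnihilator_dualCoannihilator_eq (W := T), Submodule.mem_dualCoannihilator]
  exact fun φ hφ => h (LinearMap.toContinuousLinearMap φ) ((Submodule.mem_dualAnnihilator φ).1 hφ)

end Annihilator

section DualPair

variable {E₀ E₁ : Type*} [NormedAddCommGroup E₀] [NormedSpace ℝ E₀]
  [NormedAddCommGroup E₁] [NormedSpace ℝ E₁]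
  {π₀ : (E₀ →L[ℝ] ℝ) →ₗ[ℝ] E₀} {π₁ : (E₁ →L[ℝ] ℝ) →ₗ[ℝ] E₁} {U : E₁ ≃L[ℝ] E₀}

theorem symm_map_eq_map_comp (hU : ∀ α : E₀ →L[ℝ] ℝ, U (π₁ (α.comp (U : E₁ →L[ℝ] E₀))) = π₀ α)
    (γ : E₀ →L[ℝ] ℝ) : U.symm (π₀ γ) = π₁ (γ.comp (U : E₁ →L[ℝ] E₀)) :=
  U.symm_apply_eq.2 (hU γ).symm

theorem apply_map_eq_neg_apply_symm_map (hπ₁ : ∀ α β : E₁ →L[ℝ] ℝ, α (π₁ β) = -β (π₁ α))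
    (hU : ∀ α : E₀ →L[ℝ] ℝ, U (π₁ (α.comp (U : E₁ →L[ℝ] E₀))) = π₀ α)
    (γ : E₀ →L[ℝ] ℝ) (β : E₁ →L[ℝ] ℝ) : γ (U (π₁ β)) = -β (U.symm (π₀ γ)) := by
  rw [symm_map_eq_map_comp hU]
  exact hπ₁ (γ.comp (U : E₁ →L[ℝ] E₀)) β

variable [FiniteDimensional ℝ E₀] {T₀ : Submodule ℝ E₀} {T₁ : Submodule ℝ E₁} {w : WPair E₀}

theorem Omega_eq_zero_of_boundary_conditions (hπ₀ : ∀ α β : E₀ →L[ℝ] ℝ, α (π₀ β) = -β (π₀ α))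
    (hπ₁ : ∀ α β : E₁ →L[ℝ] ℝ, α (π₁ β) = -β (π₁ α))
    (hU : ∀ α : E₀ →L[ℝ] ℝ, U (π₁ (α.comp (U : E₁ →L[ℝ] E₀))) = π₀ α) {a : WPair E₀}
    (ha : IsSolution π₀ a) (ha0 : a.lam 0 ∈ π₀ '' Ann T₀) (ha1 : U.symm (a.lam 1) ∈ T₁)
    (hw : IsSolution π₀ w) (hw0 : w.lam 0 ∈ T₀) (hw1 : U.symm (w.lam 1) ∈ π₁ '' Ann T₁) :
    Omega a w = 0 := by
  obtain ⟨α, hα, hαa⟩ := ha0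
  obtain ⟨β, hβ, hβw⟩ := hw1
  have hw1 : w.lam 1 = U (π₁ β) := by rw [hβw, U.apply_symm_apply]
  have hG : (∫ s in (0:ℝ)..1, w.phi s) (a.lam 0) = α (w.lam 1) := by
    rw [← hαa, hπ₀, hw.map_integral_phi, map_sub, hα _ hw0, zero_sub, neg_neg]
  have hF : (∫ s in (0:ℝ)..1, a.phi s) (w.lam 1) = -β (U.symm (a.lam 0)) := by
    rw [hw1, apply_map_eq_neg_apply_symm_map hπ₁ hU, ha.map_integral_phi, map_sub, map_sub,
      hβ _ ha1, sub_zero]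
  have hα1 : α (w.lam 1) = -β (U.symm (a.lam 0)) := by
    rw [hw1, apply_map_eq_neg_apply_symm_map hπ₁ hU, hαa]
  rw [← neg_eq_zero, ← Omega_comm, Omega_eq_of_isSolution hπ₀ hw ha, hG, hF, hα1, sub_self]

theorem isSolution_of_mem_orth (hπ₀ : ∀ α β : E₀ →L[ℝ] ℝ, α (π₀ β) = -β (π₀ α))
    (hw : w ∈ orth {a | IsSolution π₀ a ∧ a.lam 0 ∈ π₀ '' Ann T₀ ∧ U.symm (a.lam 1) ∈ T₁}) :
    IsSolution π₀ w :=
  isSolution_of_forall_Omega_testPair_eq_zero hπ₀ fun α g hg hg0 =>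
    hw _ ⟨testPair_isSolution α 0 hg, ⟨0, fun _ _ => rfl, by simp [testPair]⟩,
      by simp [testPair, hg0]⟩

theorem lam_zero_mem_of_mem_orth (hπ₀ : ∀ α β : E₀ →L[ℝ] ℝ, α (π₀ β) = -β (π₀ α))
    (hw : w ∈ orth {a | IsSolution π₀ a ∧ a.lam 0 ∈ π₀ '' Ann T₀ ∧ U.symm (a.lam 1) ∈ T₁}) :
    w.lam 0 ∈ T₀ := by
  refine mem_of_forall_ann fun α hα => ?_
  have h := hw (testPair π₀ α (π₀ α) (fun _ => 1) continuousOn_const)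
    ⟨testPair_isSolution α _ _, ⟨α, hα, by simp [testPair]⟩, by simp [testPair]⟩
  rwa [Omega_testPair_one hπ₀ (isSolution_of_mem_orth hπ₀ hw), sub_self, map_zero,
    sub_zero] at h

theorem symm_lam_one_mem_of_mem_orth [FiniteDimensional ℝ E₁]
    (hπ₀ : ∀ α β : E₀ →L[ℝ] ℝ, α (π₀ β) = -β (π₀ α))
    (hπ₁ : ∀ α β : E₁ →L[ℝ] ℝ, α (π₁ β) = -β (π₁ α))
    (hU : ∀ α : E₀ →L[ℝ] ℝ, U (π₁ (α.comp (U : E₁ →L[ℝ] E₀))) = π₀ α)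
    (hw : w ∈ orth {a | IsSolution π₀ a ∧ a.lam 0 ∈ π₀ '' Ann T₀ ∧ U.symm (a.lam 1) ∈ T₁}) :
    U.symm (w.lam 1) ∈ π₁ '' Ann T₁ := by
  have hsol := isSolution_of_mem_orth hπ₀ hw
  suffices U.symm (w.lam 1) ∈ (annSubmodule T₁).map π₁ from this
  refine mem_of_forall_ann fun δ hδ => ?_
  have hπδ : π₁ δ ∈ T₁ := mem_of_forall_ann fun β hβ => by
    rw [hπ₁, hδ _ (Submodule.mem_map_of_mem hβ), neg_zero]
  set γ := δ.comp (U.symm : E₀ →L[ℝ] E₁)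
  have hγ : U.symm (π₀ γ) = π₁ δ := by
    rw [symm_map_eq_map_comp hU]
    congr 1
    ext
    simp [γ]
  have h := hw (testPair π₀ γ 0 (fun _ => 1) continuousOn_const)
    ⟨testPair_isSolution γ _ _, ⟨0, fun _ _ => rfl, by simp [testPair]⟩,
      by simpa [testPair, hγ] using T₁.neg_mem hπδ⟩
  rw [Omega_testPair_one hπ₀ hsol, zero_sub, map_neg, sub_neg_eq_add, hπ₀,
    hsol.map_integral_phi, map_sub] at h
  change γ (w.lam 1) = 0
  linarith

end DualPair

theorem dual_pair_kernels_orthogonal_general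
    (E₀ E₁ : Type*)
    [NormedAddCommGroup E₀] [NormedSpace ℝ E₀] [FiniteDimensional ℝ E₀]
    [NormedAddCommGroup E₁] [NormedSpace ℝ E₁] [FiniteDimensional ℝ E₁]
    (π₀ : (E₀ →L[ℝ] ℝ) →ₗ[ℝ] E₀) (π₁ : (E₁ →L[ℝ] ℝ) →ₗ[ℝ] E₁)
    (hskew₀ : ∀ α β : E₀ →L[ℝ] ℝ, α (π₀ β) = - β (π₀ α))
    (hskew₁ : ∀ α β : E₁ →L[ℝ] ℝ, α (π₁ β) = - β (π₁ α))
    (U : E₁ ≃L[ℝ] E₀)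
    (hU : ∀ α : E₀ →L[ℝ] ℝ, U (π₁ (α.comp (U : E₁ →L[ℝ] E₀))) = π₀ α)
    (T₀ : Submodule ℝ E₀) (T₁ : Submodule ℝ E₁) :
    orth {w : WPair E₀ |
        (∀ u ∈ Icc (0:ℝ) 1, w.lam u = w.lam 0 - π₀ (∫ s in (0:ℝ)..u, w.phi s)) ∧
        w.lam 0 ∈ π₀ '' Ann T₀ ∧ U.symm (w.lam 1) ∈ T₁} =
      {w : WPair E₀ |
        (∀ u ∈ Icc (0:ℝ) 1, w.lam u = w.lam 0 - π₀ (∫ s in (0:ℝ)..u, w.phi s)) ∧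
        w.lam 0 ∈ T₀ ∧ U.symm (w.lam 1) ∈ π₁ '' Ann T₁} := by
  ext w
  refine ⟨fun hw => ⟨isSolution_of_mem_orth hskew₀ hw, lam_zero_mem_of_mem_orth hskew₀ hw,
    symm_lam_one_mem_of_mem_orth hskew₀ hskew₁ hU hw⟩, ?_⟩
  rintro ⟨hw, hw0, hw1⟩ a ⟨ha, ha0, ha1⟩
  exact Omega_eq_zero_of_boundary_conditions hskew₀ hskew₁ hU ha ha0 ha1 hw hw0 hw1

theorem dual_pair_kernels_orthogonal
    (E₀ E₁ : Type*)
    [NormedAddCommGroup E₀] [NormedSpace ℝ E₀] [FiniteDimensional ℝ E₀]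
    [NormedAddCommGroup E₁] [NormedSpace ℝ E₁] [FiniteDimensional ℝ E₁]
    (π₀ : (E₀ →L[ℝ] ℝ) →ₗ[ℝ] E₀) (π₁ : (E₁ →L[ℝ] ℝ) →ₗ[ℝ] E₁)
    (hskew₀ : ∀ α β : E₀ →L[ℝ] ℝ, α (π₀ β) = - β (π₀ α))
    (hskew₁ : ∀ α β : E₁ →L[ℝ] ℝ, α (π₁ β) = - β (π₁ α))
    (U : E₁ ≃L[ℝ] E₀)
    (hU : ∀ α : E₀ →L[ℝ] ℝ, U (π₁ (α.comp (U : E₁ →L[ℝ] E₀))) = π₀ α)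
    (T₀ : Submodule ℝ E₀) (T₁ : Submodule ℝ E₁)
    (hT₀ : ∀ α ∈ Ann T₀, π₀ α ∈ T₀) (hT₁ : ∀ α ∈ Ann T₁, π₁ α ∈ T₁) :
    orth {w : WPair E₀ |
        (∀ u ∈ Icc (0:ℝ) 1, w.lam u = w.lam 0 - π₀ (∫ s in (0:ℝ)..u, w.phi s)) ∧
        w.lam 0 ∈ π₀ '' Ann T₀ ∧ U.symm (w.lam 1) ∈ T₁} =
      {w : WPair E₀ |
        (∀ u ∈ Icc (0:ℝ) 1, w.lam u = w.lam 0 - π₀ (∫ s in (0:ℝ)..u, w.phi s)) ∧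
        w.lam 0 ∈ T₀ ∧ U.symm (w.lam 1) ∈ π₁ '' Ann T₁} :=
  dual_pair_kernels_orthogonal_general E₀ E₁ π₀ π₁ hskew₀ hskew₁ U hU T₀ T₁
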